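/- Let f be smooth on ℝ⁴ and suppose the map ∇ʰf = (X1 f, X2 f): ℝ⁴ → ℝ² is a submersion at every point of V_f = (∇ʰf)⁻¹(0). Then for every compact set B ⊂ ℝ⁴ there exist constants 0 < C₁ ≤ C₂ such that for all x ∈ B: C₁·dist(x, V_f) ≤ ‖∇ʰf(x)‖ ≤ C₂·dist(x, V_f), where dist is the Euclidean distance to V_f and ‖∇ʰf(x)‖² = (X1 f(x))² + (X2 f(x))². -/

import Mathlib

noncomputable section

open Metric Set Function

/-- ℝ⁴ with the Euclidean metric. Coordinates: `x 0 = x₁`, `x 1 = x₂`, `x 2 = x₃`, `x 3 = x₄`. -/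
abbrev E4 := EuclideanSpace ℝ (Fin 4)

/-- The vector field X1 = ∂/∂x1. -/
def X1v (_ : E4) : E4 := (WithLp.equiv 2 (Fin 4 → ℝ)).symm ![1, 0, 0, 0]

/-- The vector field X2 = ∂/∂x2 + x1·∂/∂x3 + x3·∂/∂x4. -/
def X2v (x : E4) : E4 := (WithLp.equiv 2 (Fin 4 → ℝ)).symm ![0, 1, x 0, x 2]

/-- The vector field X3 = ∂/∂x3. -/
def X3v (_ : E4) : E4 := (WithLp.equiv 2 (Fin 4 → ℝ)).symm ![0, 0, 1, 0]

/-- The vector field X4 = ∂/∂x4. -/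
def X4v (_ : E4) : E4 := (WithLp.equiv 2 (Fin 4 → ℝ)).symm ![0, 0, 0, 1]

/-- X1 f : derivative of f along X1. -/
def X1 (f : E4 → ℝ) (x : E4) : ℝ := fderiv ℝ f x (X1v x)

/-- X2 f : derivative of f along X2. -/
def X2 (f : E4 → ℝ) (x : E4) : ℝ := fderiv ℝ f x (X2v x)

/-- X3 f : derivative of f along X3. -/
def X3 (f : E4 → ℝ) (x : E4) : ℝ := fderiv ℝ f x (X3v x)

/-- X4 f : derivative of f along X4. -/
def X4 (f : E4 → ℝ) (x : E4) : ℝ := fderiv ℝ f x (X4v x)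

/-- The plane Δ_x = span{X1(x), X2(x)}. -/
def Delta (x : E4) : Submodule ℝ E4 := Submodule.span ℝ {X1v x, X2v x}

/-- The horizontal gradient viewed as a map ℝ⁴ → ℝ², x ↦ (X1f(x), X2f(x)). -/
def gradh (f : E4 → ℝ) (x : E4) : Fin 2 → ℝ := ![X1 f x, X2 f x]

/-- The sub-Riemannian norm of the horizontal gradient: ‖∇ʰf(x)‖² = (X1f)² + (X2f)². -/
def nGradh (f : E4 → ℝ) (x : E4) : ℝ := Real.sqrt ((X1 f x) ^ 2 + (X2 f x) ^ 2)

lemma contDiff_coord (i : Fin 4) : ContDiff ℝ (⊤ : ℕ∞) (fun x : E4 => x i) :=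
  (ContinuousLinearMap.proj i : ((Fin 4) → ℝ) →L[ℝ] ℝ).contDiff.comp
    (PiLp.continuousLinearEquiv 2 ℝ (fun _ : Fin 4 => ℝ)).contDiff

lemma contDiff_X2v : ContDiff ℝ (⊤ : ℕ∞) X2v := by
  have h : X2v = fun x : E4 =>
      (PiLp.continuousLinearEquiv 2 ℝ (fun _ : Fin 4 => ℝ)).symm ![0, 1, x 0, x 2] := rfl
  rw [h]
  apply (PiLp.continuousLinearEquiv 2 ℝ (fun _ : Fin 4 => ℝ)).symm.contDiff.comp
  apply contDiff_pi.2
  intro i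
  fin_cases i <;> simp <;> first
    | exact contDiff_const
    | exact contDiff_coord _


lemma contDiff_gradh {f : E4 → ℝ} (hf : ContDiff ℝ (⊤ : ℕ∞) f) : ContDiff ℝ (⊤ : ℕ∞) (gradh f) := by
  have hd : ContDiff ℝ (⊤ : ℕ∞) (fderiv ℝ f) := hf.fderiv_right (by simp)
  have hX1v : ContDiff ℝ (⊤ : ℕ∞) X1v := contDiff_const
  have h1 : ContDiff ℝ (⊤ : ℕ∞) (X1 f) := hd.clm_apply hX1v
  have h2 : ContDiff ℝ (⊤ : ℕ∞) (X2 f) := hd.clm_apply contDiff_X2v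
  apply contDiff_pi.2
  intro i
  fin_cases i
  · simpa [gradh] using h1
  · simpa [gradh] using h2

lemma gradh_eq_zero_iff (f : E4 → ℝ) (x : E4) :
    gradh f x = 0 ↔ X1 f x = 0 ∧ X2 f x = 0 := by
  constructor
  · intro h
    exact ⟨by simpa [gradh] using congrFun h 0, by simpa [gradh] using congrFun h 1⟩
  · rintro ⟨h1, h2⟩
    funext i; fin_cases i <;> simp [gradh, h1, h2]

lemma norm_gradh_le (f : E4 → ℝ) (x : E4) : ‖gradh f x‖ ≤ nGradh f x := by
  apply pi_norm_le_iff_of_nonneg (Real.sqrt_nonneg _) |>.2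
  intro i
  fin_cases i
  · show ‖X1 f x‖ ≤ nGradh f x
    rw [Real.norm_eq_abs, ← Real.sqrt_sq_eq_abs]
    exact Real.sqrt_le_sqrt (by nlinarith [sq_nonneg (X2 f x)])
  · show ‖X2 f x‖ ≤ nGradh f x
    rw [Real.norm_eq_abs, ← Real.sqrt_sq_eq_abs]
    exact Real.sqrt_le_sqrt (by nlinarith [sq_nonneg (X1 f x)])

lemma nGradh_le (f : E4 → ℝ) (x : E4) : nGradh f x ≤ Real.sqrt 2 * ‖gradh f x‖ := by
  have h0 : |X1 f x| ≤ ‖gradh f x‖ := by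
    simpa [gradh] using norm_le_pi_norm (gradh f x) 0
  have h1 : |X2 f x| ≤ ‖gradh f x‖ := by
    simpa [gradh] using norm_le_pi_norm (gradh f x) 1
  have hn : (0:ℝ) ≤ ‖gradh f x‖ := norm_nonneg _
  calc nGradh f x ≤ Real.sqrt (2 * ‖gradh f x‖ ^ 2) := by
        apply Real.sqrt_le_sqrt
        nlinarith [abs_nonneg (X1 f x), abs_nonneg (X2 f x), sq_abs (X1 f x), sq_abs (X2 f x)]
    _ = Real.sqrt 2 * ‖gradh f x‖ := by
        rw [Real.sqrt_mul (by norm_num), Real.sqrt_sq hn]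

open scoped NNReal in
lemma key_local {f : E4 → ℝ} (hf : ContDiff ℝ (⊤ : ℕ∞) f) {Vf : Set E4}
    (hVf : Vf = {x | X1 f x = 0 ∧ X2 f x = 0})
    {p : E4} (hp : p ∈ Vf) (hsurj : Function.Surjective (fderiv ℝ (gradh f) p)) :
    ∃ ε > 0, ∃ m > 0, ∀ x ∈ ball p ε, m * infDist x Vf ≤ ‖gradh f x‖ := by
  set g := gradh f with hg_def
  have hg : ContDiff ℝ (⊤ : ℕ∞) g := contDiff_gradh hf
  have hrange : LinearMap.range (fderiv ℝ g p : E4 →ₗ[ℝ] (Fin 2 → ℝ)) = ⊤ := LinearMap.range_eq_top.2 hsurj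
  set f' := fderiv ℝ g p with hf'
  set f'symm := f'.nonlinearRightInverseOfSurjective hrange with hfs
  have hN : 0 < f'symm.nnnorm := f'.nonlinearRightInverseOfSurjective_nnnorm_pos hrange
  set c : ℝ≥0 := f'symm.nnnorm⁻¹ / 2 with hc_def
  have hc : 0 < c := by
    rw [hc_def]
    exact div_pos (inv_pos.2 hN) two_pos
  have hst : HasStrictFDerivAt g f' p := (hg.contDiffAt).hasStrictFDerivAt (by simp)
  obtain ⟨s, hs, happ⟩ := hst.approximates_deriv_on_nhds (Or.inr hc)
  obtain ⟨ε₂, hε₂, hball⟩ := Metric.nhds_basis_closedBall.mem_iff.1 hs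
  set m : ℝ := (f'symm.nnnorm : ℝ)⁻¹ / 2 with hm_def
  have hNR : (0:ℝ) < (f'symm.nnnorm : ℝ) := hN
  have hm : 0 < m := by rw [hm_def]; positivity
  have hcm : (c : ℝ) = m := by rw [hc_def, hm_def]; push_cast; ring
  have hgp : g p = 0 := (gradh_eq_zero_iff f p).2 (by rw [hVf] at hp; exact hp)
  obtain ⟨ε₁, hε₁, hsmall⟩ := Metric.continuousAt_iff.1 (hg.continuous.continuousAt (x := p))
    (m * (ε₂ / 2)) (by positivity)
  refine ⟨min ε₁ (ε₂ / 2), by positivity, m, hm, ?_⟩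
  intro x hx
  have hx1 : dist x p < ε₁ := lt_of_lt_of_le (mem_ball.1 hx) (min_le_left _ _)
  have hx2 : dist x p < ε₂ / 2 := lt_of_lt_of_le (mem_ball.1 hx) (min_le_right _ _)
  have hgx : ‖g x‖ < m * (ε₂ / 2) := by
    have := hsmall hx1
    rwa [hgp, dist_zero_right] at this
  set r : ℝ := ‖g x‖ / m with hr_def
  have hr0 : 0 ≤ r := by positivity
  have hrlt : r < ε₂ / 2 := by
    rw [hr_def, div_lt_iff₀ hm]
    linarith [hgx]
  have hsub2 : closedBall x r ⊆ s := by
    intro z hz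
    apply hball
    have h1 : dist z x ≤ r := mem_closedBall.1 hz
    have h2 : dist z p ≤ dist z x + dist x p := dist_triangle _ _ _
    exact mem_closedBall.2 (by linarith)
  have happ' := happ.mono_set hsub2
  have hsurjOn := happ'.surjOn_closedBall_of_nonlinearRightInverse f'symm hr0 Subset.rfl
  have hmr : m * r = ‖g x‖ := by
    rw [hr_def, mul_comm, div_mul_cancel₀ _ (ne_of_gt hm)]
  have h0mem : (0 : Fin 2 → ℝ) ∈ closedBall (g x) (((f'symm.nnnorm : ℝ)⁻¹ - c) * r) := by
    have hmc : ((f'symm.nnnorm : ℝ)⁻¹ - (c : ℝ)) = m := by rw [hcm, hm_def]; ring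
    rw [mem_closedBall, hmc, dist_zero_left, ← hmr]
  obtain ⟨z, hz_ball, hz0⟩ := hsurjOn h0mem
  have hzV : z ∈ Vf := by
    rw [hVf]
    exact (gradh_eq_zero_iff f z).1 hz0
  have hdle : infDist x Vf ≤ r := by
    refine (infDist_le_dist_of_mem hzV).trans ?_
    rw [dist_comm]
    exact mem_closedBall.1 hz_ball
  calc m * infDist x Vf ≤ m * r := mul_le_mul_of_nonneg_left hdle hm.le
    _ = ‖g x‖ := hmr


/-- if ∇ʰf is a submersion on V_f = {∇ʰf = 0}, then on every compact set B
there are constants 0 < C₁ ≤ C₂ with C₁·d(x,V_f) ≤ ‖∇ʰf(x)‖ ≤ C₂·d(x,V_f). -/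
theorem stmt12 (f : E4 → ℝ) (hf : ContDiff ℝ (⊤ : ℕ∞) f)
    (Vf : Set E4) (hVf : Vf = {x | X1 f x = 0 ∧ X2 f x = 0}) (hne : Vf.Nonempty)
    (hsub : ∀ x ∈ Vf, Function.Surjective (fderiv ℝ (gradh f) x))
    (B : Set E4) (hB : IsCompact B) :
    ∃ C₁ C₂ : ℝ, 0 < C₁ ∧ C₁ ≤ C₂ ∧ ∀ x ∈ B,
      C₁ * Metric.infDist x Vf ≤ nGradh f x ∧ nGradh f x ≤ C₂ * Metric.infDist x Vf := by
  set g := gradh f with hg_def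
  have hg : ContDiff ℝ (⊤ : ℕ∞) g := contDiff_gradh hf
  have hgc : Continuous g := hg.continuous
  have hVclosed : IsClosed Vf := by
    have h : Vf = g ⁻¹' {0} := by
      ext x
      rw [hVf]
      simp only [mem_setOf_eq, mem_preimage, mem_singleton_iff]
      exact (gradh_eq_zero_iff f x).symm
    rw [h]
    exact isClosed_singleton.preimage hgc
  obtain ⟨v₀, hv₀⟩ := hne
  rcases B.eq_empty_or_nonempty with hBe | hBne
  · exact ⟨1, 1, one_pos, le_refl 1, by simp [hBe]⟩
  obtain ⟨R₀, hR₀⟩ := hB.isBounded.subset_closedBall 0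
  have hR₀0 : 0 ≤ R₀ := by
    obtain ⟨b, hb⟩ := hBne
    exact (norm_nonneg b).trans (mem_closedBall_zero_iff.1 (hR₀ hb))
  set D : ℝ := R₀ + ‖v₀‖ + 1 with hD
  have hD0 : 0 < D := by positivity
  have hinf_le : ∀ x ∈ B, infDist x Vf ≤ R₀ + ‖v₀‖ := by
    intro x hx
    refine (infDist_le_dist_of_mem hv₀).trans ?_
    have hxn : ‖x‖ ≤ R₀ := mem_closedBall_zero_iff.1 (hR₀ hx)
    calc dist x v₀ = ‖x - v₀‖ := dist_eq_norm _ _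
      _ ≤ ‖x‖ + ‖v₀‖ := norm_sub_le _ _
      _ ≤ R₀ + ‖v₀‖ := by linarith
  set R : ℝ := 2 * R₀ + ‖v₀‖ + 1 with hRdef
  have hnear : ∀ x ∈ B, ∃ y ∈ Vf, infDist x Vf = dist x y ∧ y ∈ closedBall (0 : E4) R := by
    intro x hx
    obtain ⟨y, hyV, hyd⟩ := hVclosed.exists_infDist_eq_dist ⟨v₀, hv₀⟩ x
    refine ⟨y, hyV, hyd, ?_⟩
    have h1 : dist x y ≤ R₀ + ‖v₀‖ := hyd ▸ hinf_le x hx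
    have hxn : ‖x‖ ≤ R₀ := mem_closedBall_zero_iff.1 (hR₀ hx)
    have h2 : dist y (0 : E4) ≤ dist y x + dist x 0 := dist_triangle _ _ _
    rw [mem_closedBall]
    rw [dist_comm] at h1
    simp only [dist_zero_right] at h2 ⊢
    linarith
  -- upper bound
  have hS : IsCompact (closedBall (0 : E4) R) := isCompact_closedBall _ _
  have hfd : Continuous (fderiv ℝ g) := (hg.fderiv_right (m := (⊤ : ℕ∞)) (by simp)).continuous
  obtain ⟨M, hM⟩ := hS.exists_bound_of_continuousOn hfd.continuousOn
  set M' : ℝ := max M 0 with hM'def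
  have hupper : ∀ x ∈ B, ‖g x‖ ≤ M' * infDist x Vf := by
    intro x hx
    obtain ⟨y, hyV, hyd, hyR⟩ := hnear x hx
    have hgy : g y = 0 := (gradh_eq_zero_iff f y).2 (by rw [hVf] at hyV; exact hyV)
    have hxR : x ∈ closedBall (0 : E4) R := by
      have h1 := mem_closedBall_zero_iff.1 (hR₀ hx)
      have h2 : (0:ℝ) ≤ ‖v₀‖ := norm_nonneg _
      rw [mem_closedBall_zero_iff]
      linarith
    have hmv : ‖g x - g y‖ ≤ M' * ‖x - y‖ := Convex.norm_image_sub_le_of_norm_fderiv_le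
      (fun z _ => (hg.differentiable (by simp)) z)
      (fun z hz => le_trans (hM z hz) (le_max_left M 0))
      (convex_closedBall (0 : E4) R) hyR hxR
    rw [hgy, sub_zero] at hmv
    rw [hyd, dist_eq_norm]
    exact hmv
  -- local lower bounds
  have key : ∀ p ∈ Vf, ∃ ε > 0, ∃ m > 0, ∀ x ∈ ball p ε, m * infDist x Vf ≤ ‖g x‖ :=
    fun p hp => key_local hf hVf hp (hsub p hp)
  choose! ε hεpos m hmpos hkey using key
  set T := Vf ∩ closedBall (0 : E4) R with hTdef
  have hT : IsCompact T := hS.inter_left hVclosed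
  have hTne : T.Nonempty := by
    obtain ⟨b, hb⟩ := hBne
    obtain ⟨y, hyV, _, hyR⟩ := hnear b hb
    exact ⟨y, hyV, hyR⟩
  obtain ⟨t, htsub, htcover⟩ := hT.elim_nhds_subcover (fun p => ball p (ε p / 2))
    (fun p hp => ball_mem_nhds p (by have := hεpos p hp.1; positivity))
  have htne : t.Nonempty := by
    rw [Finset.nonempty_iff_ne_empty]
    intro h
    obtain ⟨y, hy⟩ := hTne
    have := htcover hy
    simp [h] at this
  set εmin : ℝ := t.inf' htne (fun p => ε p / 2) with hεmindef
  set mmin : ℝ := t.inf' htne m with hmmindef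
  have hεmin : 0 < εmin := by
    rw [hεmindef, Finset.lt_inf'_iff]
    intro p hp
    have := hεpos p (htsub p hp).1
    positivity
  have hmmin : 0 < mmin := by
    rw [hmmindef, Finset.lt_inf'_iff]
    intro p hp
    exact hmpos p (htsub p hp).1
  set B' := B ∩ {x | εmin ≤ infDist x Vf} with hB'def
  have hB'comp : IsCompact B' :=
    hB.inter_right (isClosed_le continuous_const (continuous_infDist_pt Vf))
  have hδ : ∃ δ > 0, ∀ z ∈ B', δ ≤ ‖g z‖ := by
    rcases B'.eq_empty_or_nonempty with h | h
    · exact ⟨1, one_pos, by simp [h]⟩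
    · obtain ⟨z₀, hz₀, hz₀min⟩ := hB'comp.exists_isMinOn h (continuous_norm.comp hgc).continuousOn
      refine ⟨‖g z₀‖, ?_, fun z hz => hz₀min hz⟩
      have hz₀B : εmin ≤ infDist z₀ Vf := hz₀.2
      have hnmem : z₀ ∉ Vf := by
        intro hmem
        rw [infDist_zero_of_mem hmem] at hz₀B
        linarith
      have hgne : g z₀ ≠ 0 := by
        intro h0
        exact hnmem (by rw [hVf]; exact (gradh_eq_zero_iff f z₀).1 h0)
      exact norm_pos_iff.2 hgne
  obtain ⟨δ, hδ0, hδle⟩ := hδ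
  set C₁ : ℝ := min mmin (δ / D) with hC₁def
  have hC₁ : 0 < C₁ := lt_min hmmin (div_pos hδ0 hD0)
  have hlower : ∀ x ∈ B, C₁ * infDist x Vf ≤ ‖g x‖ := by
    intro x hx
    rcases lt_or_ge (infDist x Vf) εmin with hcase | hcase
    · obtain ⟨y, hyV, hyd, hyR⟩ := hnear x hx
      have hyT : y ∈ T := ⟨hyV, hyR⟩
      have hmem := htcover hyT
      simp only [mem_iUnion, exists_prop] at hmem
      obtain ⟨p, hpt, hyp⟩ := hmem
      have hpV : p ∈ Vf := (htsub p hpt).1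
      have hεrel : εmin ≤ ε p / 2 := Finset.inf'_le _ hpt
      have hxp : dist x p < ε p := by
        have h1 : dist x y < εmin := hyd ▸ hcase
        have h2 : dist y p < ε p / 2 := mem_ball.1 hyp
        calc dist x p ≤ dist x y + dist y p := dist_triangle _ _ _
          _ < εmin + ε p / 2 := by linarith
          _ ≤ ε p := by linarith
      have hkx := hkey p hpV x (mem_ball.2 hxp)
      have hm2 : mmin ≤ m p := Finset.inf'_le _ hpt
      have hd0 : (0:ℝ) ≤ infDist x Vf := infDist_nonneg
      calc C₁ * infDist x Vf ≤ mmin * infDist x Vf :=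
            mul_le_mul_of_nonneg_right (min_le_left _ _) hd0
        _ ≤ m p * infDist x Vf := mul_le_mul_of_nonneg_right hm2 hd0
        _ ≤ ‖g x‖ := hkx
    · have hxB' : x ∈ B' := ⟨hx, hcase⟩
      have h1 : infDist x Vf ≤ D := (hinf_le x hx).trans (by rw [hD]; linarith)
      calc C₁ * infDist x Vf ≤ (δ / D) * D :=
            mul_le_mul (min_le_right _ _) h1 infDist_nonneg (div_pos hδ0 hD0).le
        _ = δ := div_mul_cancel₀ δ (ne_of_gt hD0)
        _ ≤ ‖g x‖ := hδle x hxB'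
  refine ⟨C₁, max (Real.sqrt 2 * M') C₁, hC₁, le_max_right _ _, fun x hx => ?_⟩
  constructor
  · exact (hlower x hx).trans (norm_gradh_le f x)
  · calc nGradh f x ≤ Real.sqrt 2 * ‖g x‖ := nGradh_le f x
      _ ≤ Real.sqrt 2 * (M' * infDist x Vf) :=
          mul_le_mul_of_nonneg_left (hupper x hx) (Real.sqrt_nonneg 2)
      _ = (Real.sqrt 2 * M') * infDist x Vf := by ring
      _ ≤ max (Real.sqrt 2 * M') C₁ * infDist x Vf :=
          mul_le_mul_of_nonneg_right (le_max_left _ _) infDist_nonneg
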